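/- arXiv:1206.6532 — 3 statements merged into one kernel-verified Lean document; each statement's English description precedes it below -/
import Mathlib

section
/- For the function g : ℝ × ℝ → ℝ defined by g(x, θ) = x⁴/2 + θ² − |θ|·x², and any fixed x ≠ 0, the function θ ↦ g(x, θ) is not differentiable at θ = 0; in contrast, the reduced function g̃(x) = infimum over θ ∈ ℝ of g(x, θ) equals x⁴/4 for every x and hence is infinitely differentiable on ℝ. -/
/-- nonsmooth `g`, smooth reduced function.
For `g(x, θ) = x⁴/2 + θ² − |θ|x²` and any fixed `x ≠ 0`, the map `θ ↦ g(x, θ)` is not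
differentiable at `θ = 0`; nevertheless the reduced function `x ↦ ⨅ θ, g(x, θ)`
equals `x⁴/4` for every `x`, hence is infinitely differentiable on `ℝ`. -/
theorem stmt6 (g : ℝ × ℝ → ℝ)
    (hg : ∀ p : ℝ × ℝ, g p = p.1 ^ 4 / 2 + p.2 ^ 2 - |p.2| * p.1 ^ 2) :
    (∀ x : ℝ, x ≠ 0 → ¬ DifferentiableAt ℝ (fun θ : ℝ => g (x, θ)) 0) ∧
    (∀ x : ℝ, (⨅ θ : ℝ, g (x, θ)) = x ^ 4 / 4) ∧
    ContDiff ℝ (⊤ : ℕ∞) (fun x : ℝ => ⨅ θ : ℝ, g (x, θ)) := by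
  have key : ∀ x : ℝ, (⨅ θ : ℝ, g (x, θ)) = x ^ 4 / 4 := by
    intro x
    have hval : ∀ θ : ℝ, g (x, θ) = x ^ 4 / 4 + (|θ| - x ^ 2 / 2) ^ 2 := by
      intro θ
      rw [hg]
      have : |θ| ^ 2 = θ ^ 2 := sq_abs θ
      simp only []
      nlinarith [sq_abs θ]
    have hlb : ∀ θ : ℝ, x ^ 4 / 4 ≤ g (x, θ) := by
      intro θ; rw [hval]; nlinarith [sq_nonneg (|θ| - x ^ 2 / 2)]
    refine le_antisymm ?_ (le_ciInf hlb)
    have h1 : (⨅ θ : ℝ, g (x, θ)) ≤ g (x, x ^ 2 / 2) :=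
      ciInf_le ⟨x ^ 4 / 4, fun y ⟨θ, hθ⟩ => hθ ▸ hlb θ⟩ _
    have h2 : g (x, x ^ 2 / 2) = x ^ 4 / 4 := by
      rw [hval]
      have : |x ^ 2 / 2| = x ^ 2 / 2 := abs_of_nonneg (by positivity)
      rw [this]; ring
    linarith
  refine ⟨?_, key, ?_⟩
  · intro x hx hdiff
    have hx2 : (x ^ 2 : ℝ) ≠ 0 := pow_ne_zero 2 hx
    have h1 : DifferentiableAt ℝ (fun θ : ℝ => x ^ 4 / 2 + θ ^ 2 - g (x, θ)) 0 := by
      apply DifferentiableAt.sub _ hdiff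
      exact DifferentiableAt.add (differentiableAt_const _) (by fun_prop)
    have h2 : (fun θ : ℝ => x ^ 4 / 2 + θ ^ 2 - g (x, θ)) = fun θ : ℝ => |θ| * x ^ 2 := by
      funext θ; rw [hg]; ring
    rw [h2] at h1
    have h3 : DifferentiableAt ℝ (fun θ : ℝ => |θ|) 0 := by
      have := h1.mul_const (x ^ 2)⁻¹
      simpa [mul_assoc, mul_inv_cancel₀ hx2] using this
    exact not_differentiableAt_abs_zero h3
  · have : (fun x : ℝ => ⨅ θ : ℝ, g (x, θ)) = fun x : ℝ => x ^ 4 / 4 := funext key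
    rw [this]
    exact (contDiff_id.pow 4).div_const 4
end

section
/- Let F : ℝⁿ → ℝᴺ be differentiable at x̄ (with Fréchet derivative DF(x̄)), let d ∈ ℝᴺ, set r = d − F(x̄), and assume r ≠ 0. Let N ≥ 1 be a natural number. Then the reduced negative log-likelihood x ↦ N·log(2π·‖d − F(x)‖²/N) is differentiable at x̄ and its gradient at x̄ equals −(2N/‖r‖²)·(DF(x̄))*(r), where (DF(x̄))* is the adjoint of the continuous linear map DF(x̄) with respect to the Euclidean inner products. -/
open Real

section Gradient

variable {E F : Type*} [NormedAddCommGroup E] [InnerProductSpace ℝ E] [CompleteSpace E]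
  [NormedAddCommGroup F] [InnerProductSpace ℝ F] [CompleteSpace F]

theorem HasDerivAt.comp_hasGradientAt {f : E → ℝ} {g x : E} {φ : ℝ → ℝ} {φ' : ℝ}
    (hφ : HasDerivAt φ φ' (f x)) (hf : HasGradientAt f g x) :
    HasGradientAt (φ ∘ f) (φ' • g) x := by
  rw [hasGradientAt_iff_hasFDerivAt] at hf ⊢
  simpa [map_smulₛₗ] using hφ.comp_hasFDerivAt x hf

theorem HasFDerivAt.hasGradientAt_norm_sq {G : E → F} {G' : E →L[ℝ] F} {x : E}
    (hG : HasFDerivAt G G' x) :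
    HasGradientAt (fun y => ‖G y‖ ^ 2) (2 • G'.adjoint (G x)) x := by
  rw [hasGradientAt_iff_hasFDerivAt]
  refine hG.norm_sq.congr_fderiv ?_
  ext v
  simp [ContinuousLinearMap.adjoint_inner_left]

end Gradient

theorem hasDerivAt_mul_log_mul_div (a b c t : ℝ) (hb : b ≠ 0) (hc : c ≠ 0) (ht : t ≠ 0) :
    HasDerivAt (fun s => a * Real.log (c * s / b)) (a / t) t := by
  refine ((((hasDerivAt_id' t).const_mul c).div_const b).log
    (div_ne_zero (mul_ne_zero hc ht) hb) |>.const_mul a).congr_deriv ?_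
  field_simp

/-- gradient of the reduced Gaussian negative log-likelihood.
Let `F : ℝⁿ → ℝᴺ` be differentiable at `x₀`, `d ∈ ℝᴺ`, `r = d - F x₀ ≠ 0`, `N ≥ 1`.
Then `x ↦ N·log(2π‖d - F x‖²/N)` is differentiable at `x₀` with gradient
`-(2N/‖r‖²) • (DF(x₀))* r`. -/
theorem stmt8 (n N : ℕ) (hN : 1 ≤ N)
    (F : EuclideanSpace ℝ (Fin n) → EuclideanSpace ℝ (Fin N))
    (x₀ : EuclideanSpace ℝ (Fin n)) (d : EuclideanSpace ℝ (Fin N))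
    (hF : DifferentiableAt ℝ F x₀)
    (r : EuclideanSpace ℝ (Fin N)) (hr : r = d - F x₀) (hr0 : r ≠ 0) :
    DifferentiableAt ℝ
        (fun x => (N : ℝ) * Real.log (2 * π * ‖d - F x‖ ^ 2 / N)) x₀ ∧
      gradient (fun x => (N : ℝ) * Real.log (2 * π * ‖d - F x‖ ^ 2 / N)) x₀ =
        -((2 * (N : ℝ)) / ‖r‖ ^ 2) • (ContinuousLinearMap.adjoint (fderiv ℝ F x₀)) r := by
  have hlog : HasDerivAt (fun s => (N : ℝ) * Real.log (2 * π * s / N)) (N / ‖r‖ ^ 2)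
      (‖d - F x₀‖ ^ 2) := by
    rw [← hr]
    exact hasDerivAt_mul_log_mul_div _ _ _ _ (by positivity) (by positivity) (by simpa)
  have hres := (hF.hasFDerivAt.const_sub d).hasGradientAt_norm_sq
  have hgrad := HasDerivAt.comp_hasGradientAt (f := fun x => ‖d - F x‖ ^ 2) hlog hres
  rw [← hr] at hgrad
  refine ⟨hgrad.differentiableAt, hgrad.gradient.trans ?_⟩
  rw [map_neg, neg_apply]
  module
end

section
/- Let r₁, …, r_M be vectors in ℝⁿ (M ≥ 1), and let S = (1/M)·∑_{i=1}^{M} rᵢ rᵢᵀ ∈ M_n(ℝ) be the sample covariance matrix, regarded as an n × n real matrix (rᵢ rᵢᵀ denotes the outer product). Assume S is positive definite. Then for every positive definite matrix Σ ∈ M_n(ℝ), the inequality M·log(det Σ) + ∑_{i=1}^{M} rᵢᵀ Σ⁻¹ rᵢ ≥ M·log(det S) + M·n holds, with equality if and only if Σ = S. In particular, S is the unique minimizer of the Gaussian negative log-likelihood Σ ↦ M·log(det Σ) + ∑_{i=1}^{M} rᵢᵀ Σ⁻¹ rᵢ over positive definite matrices. -/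
/-!
Write `S = Bᴴ B` with `B` invertible. For positive definite `C` the matrix `A = B C⁻¹ Bᴴ` is
positive definite, `tr A = tr (C⁻¹ S)` and `det A = det S / det C`, so after dividing by `M` the
claim reads `tr A - log det A ≥ n`, with equality iff `A = 1`, i.e. iff `C = S`. In terms of the
eigenvalues `λᵢ > 0` of `A` this is `∑ᵢ (λᵢ - log λᵢ - 1) ≥ 0`, which holds termwise by
`log x ≤ x - 1`, with equality iff every `λᵢ = 1`.
-/
open Real Matrix

lemma Real.one_le_sub_log {x : ℝ} (hx : 0 < x) : 1 ≤ x - log x := by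
  linarith [log_le_sub_one_of_pos hx]

lemma Real.sub_log_eq_one_iff {x : ℝ} (hx : 0 < x) : x - log x = 1 ↔ x = 1 := by
  refine ⟨fun h => ?_, fun h => by simp [h]⟩
  by_contra hx1
  linarith [log_lt_sub_one_of_pos hx hx1]

namespace Matrix

variable {n : Type*} [Fintype n]

lemma sum_mul_mul_eq_trace_mul_sum {R ι : Type*} [CommSemiring R] [Fintype ι]
    (A : Matrix n n R) (r : ι → n → R) :
    ∑ i, ∑ j, ∑ l, r i j * A j l * r i l = (A * ∑ i, of fun j l => r i j * r i l).trace := by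
  rw [Matrix.mul_sum, trace_sum]
  refine Finset.sum_congr rfl fun i _ => Finset.sum_congr rfl fun j _ => ?_
  simp only [diag_apply, mul_apply, of_apply]
  exact Finset.sum_congr rfl fun l _ => by ring

variable [DecidableEq n]

lemma IsHermitian.eq_one_of_eigenvalues_eq_one {𝕜 : Type*} [RCLike 𝕜] {A : Matrix n n 𝕜}
    (hA : A.IsHermitian) (h : ∀ i, hA.eigenvalues i = 1) : A = 1 := by
  rw [hA.spectral_theorem, Unitary.conjStarAlgAut_apply]
  simp only [Function.comp_def, h, RCLike.ofReal_one, diagonal_one, mul_one]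
  exact Unitary.mul_star_self_of_mem hA.eigenvectorUnitary.2

lemma PosDef.trace_sub_log_det_eq_sum {A : Matrix n n ℝ} (hA : A.PosDef) :
    A.trace - log A.det = ∑ i, (hA.1.eigenvalues i - log (hA.1.eigenvalues i)) := by
  rw [hA.1.trace_eq_sum_eigenvalues, hA.1.det_eq_prod_eigenvalues, Finset.sum_sub_distrib]
  simp [Real.log_prod fun i _ => (hA.eigenvalues_pos i).ne']

lemma PosDef.card_le_trace_sub_log_det {A : Matrix n n ℝ} (hA : A.PosDef) :
    (Fintype.card n : ℝ) ≤ A.trace - log A.det := by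
  calc (Fintype.card n : ℝ) = ∑ _i : n, (1 : ℝ) := by simp
    _ ≤ A.trace - log A.det := by
      rw [hA.trace_sub_log_det_eq_sum]
      exact Finset.sum_le_sum fun i _ => one_le_sub_log (hA.eigenvalues_pos i)

lemma PosDef.trace_sub_log_det_eq_card_iff {A : Matrix n n ℝ} (hA : A.PosDef) :
    A.trace - log A.det = Fintype.card n ↔ A = 1 := by
  refine ⟨fun h => hA.1.eq_one_of_eigenvalues_eq_one fun i => ?_, fun h => by simp [h]⟩
  have hsum : ∑ _j : n, (1 : ℝ) = ∑ j, (hA.1.eigenvalues j - log (hA.1.eigenvalues j)) := by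
    rw [← hA.trace_sub_log_det_eq_sum, h]
    simp
  rw [Finset.sum_eq_sum_iff_of_le fun j _ => one_le_sub_log (hA.eigenvalues_pos j)] at hsum
  exact (sub_log_eq_one_iff (hA.eigenvalues_pos i)).1 (hsum i (Finset.mem_univ i)).symm

lemma inv_mul_eq_one_iff_eq {R : Type*} [CommRing R] {A B : Matrix n n R} (hA : IsUnit A.det) :
    A⁻¹ * B = 1 ↔ A = B := by
  refine ⟨fun h => ?_, fun h => h ▸ nonsing_inv_mul A hA⟩
  simpa [h] using mul_nonsing_inv_cancel_left A B hA

open scoped MatrixOrder in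
lemma PosDef.exists_posDef_trace_eq_trace_inv_mul {S C : Matrix n n ℝ} (hS : S.PosDef) (hC : C.PosDef) :
    ∃ A : Matrix n n ℝ, A.PosDef ∧ A.trace = (C⁻¹ * S).trace ∧
      log A.det = log S.det - log C.det ∧ (A = 1 ↔ C = S) := by
  obtain ⟨B, hB, rfl⟩ := CStarAlgebra.isStrictlyPositive_iff_eq_star_mul_self.1 hS.isStrictlyPositive
  rw [star_eq_conjTranspose] at hS ⊢
  refine ⟨B * C⁻¹ * Bᴴ, hC.inv.mul_mul_conjTranspose_same (vecMul_injective_iff_isUnit.2 hB),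
    ?_, ?_, ?_⟩
  · rw [trace_mul_cycle, trace_mul_comm]
  · have hdet : (B * C⁻¹ * Bᴴ).det = (Bᴴ * B).det * C.det⁻¹ := by
      rw [det_mul, det_mul, det_mul, det_nonsing_inv, Ring.inverse_eq_inv]
      ring
    rw [hdet, log_mul hS.det_pos.ne' (inv_ne_zero hC.det_pos.ne'), log_inv, sub_eq_add_neg]
  · rw [mul_assoc, mul_eq_one_comm, mul_assoc, inv_mul_eq_one_iff_eq hC.det_pos.ne'.isUnit]

lemma PosDef.log_det_add_card_le {S C : Matrix n n ℝ} (hS : S.PosDef) (hC : C.PosDef) :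
    log S.det + Fintype.card n ≤ log C.det + (C⁻¹ * S).trace := by
  obtain ⟨A, hA, htrace, hdet, -⟩ := hS.exists_posDef_trace_eq_trace_inv_mul hC
  linarith [hA.card_le_trace_sub_log_det]

lemma PosDef.log_det_add_trace_inv_mul_eq_iff {S C : Matrix n n ℝ} (hS : S.PosDef)
    (hC : C.PosDef) : log C.det + (C⁻¹ * S).trace = log S.det + Fintype.card n ↔ C = S := by
  obtain ⟨A, hA, htrace, hdet, hA1⟩ := hS.exists_posDef_trace_eq_trace_inv_mul hC
  rw [← hA1, ← hA.trace_sub_log_det_eq_card_iff, htrace, hdet]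
  constructor <;> intro h <;> linarith

end Matrix

/-- the sample covariance uniquely minimizes the Gaussian negative
log-likelihood.  Let `r₁, …, r_M ∈ ℝⁿ` and let `S = (1/M) ∑ᵢ rᵢrᵢᵀ` be positive
definite.  Then for every positive definite `Σ`,
`M·log(det Σ) + ∑ᵢ rᵢᵀ Σ⁻¹ rᵢ ≥ M·log(det S) + M·n`, with equality iff `Σ = S`. -/
theorem stmt9 (n M : ℕ) (hM : 1 ≤ M)
    (r : Fin M → (Fin n → ℝ))
    (S : Matrix (Fin n) (Fin n) ℝ)
    (hS : S = ((M : ℝ)⁻¹) • ∑ i, Matrix.of fun j l => r i j * r i l)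
    (hSpd : S.PosDef) :
    ∀ C : Matrix (Fin n) (Fin n) ℝ, C.PosDef →
      ((M : ℝ) * Real.log C.det + ∑ i, ∑ j, ∑ l, r i j * C⁻¹ j l * r i l ≥
          (M : ℝ) * Real.log S.det + (M : ℝ) * (n : ℝ)) ∧
      ((M : ℝ) * Real.log C.det + ∑ i, ∑ j, ∑ l, r i j * C⁻¹ j l * r i l =
          (M : ℝ) * Real.log S.det + (M : ℝ) * (n : ℝ) ↔ C = S) := by
  intro C hC
  have hMpos : (0 : ℝ) < M := by exact_mod_cast hM
  have hsum : ∑ i, ∑ j, ∑ l, r i j * C⁻¹ j l * r i l = M * (C⁻¹ * S).trace := by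
    rw [sum_mul_mul_eq_trace_mul_sum, hS, Matrix.mul_smul, trace_smul, smul_eq_mul,
      mul_inv_cancel_left₀ hMpos.ne']
  rw [hsum, ← mul_add, ← mul_add, ge_iff_le, mul_le_mul_iff_right₀ hMpos,
    mul_right_inj' hMpos.ne']
  have hle := hSpd.log_det_add_card_le hC
  have heq := hSpd.log_det_add_trace_inv_mul_eq_iff hC
  rw [Fintype.card_fin] at hle heq
  exact ⟨hle, heq⟩
end
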